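/- For a tight IC POVM {Π_j} on ℂ^d with frame superoperator F = α I + β|1⟩⟩⟨⟨1| (α + dβ = d, α > 0), the canonical reconstruction operators Θ_j = [d² Π_j − (d − α) tr(Π_j) 1] / (d α tr(Π_j)) satisfy Σ_j |Θ_j⟩⟩⟨⟨Π_j| = I, and tr(Θ_j²) = (d² 𝓅_j − d)/α² + 1/d where 𝓅_j = tr(Π_j²)/tr(Π_j)². -/

import Mathlib

open Matrix ComplexOrder

noncomputable section

abbrev Mat (d : ℕ) := Matrix (Fin d) (Fin d) ℂ

/-- The real vector space of Hermitian `d × d` complex matrices. -/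
abbrev HermM (d : ℕ) : Submodule ℝ (Mat d) := selfAdjoint.submodule ℝ (Mat d)

/-- The identity matrix as a Hermitian matrix. -/
def hermOne (d : ℕ) : HermM d := ⟨1, IsSelfAdjoint.one (Mat d)⟩

/-- The superoperator `|A⟩⟩⟨⟨B| : X ↦ tr(B X) • A` on Hermitian matrices. -/
def outerSO (d : ℕ) (A B : HermM d) : HermM d →ₗ[ℝ] HermM d :=
  (Complex.reLm ∘ₗ Matrix.traceLinearMap (Fin d) ℝ ℂ ∘ₗ
    LinearMap.mulLeft ℝ (B : Mat d) ∘ₗ (HermM d).subtype).smulRight A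


/-!
With `α + dβ = d`, the canonical dual is `Θ_j = (d / (α tr Π_j)) Π_j − (β/α) 1`. Hence
`Σ_j |Θ_j⟩⟩⟨⟨Π_j| = α⁻¹ · d Σ_j tr(Π_j)⁻¹ |Π_j⟩⟩⟨⟨Π_j| − (β/α) |1⟩⟩⟨⟨Σ_j Π_j|`
`= α⁻¹ F − (β/α) |1⟩⟩⟨⟨1| = I`, and `tr Θ_j²` is obtained by expanding the square of a
combination of `Π_j` and `1`, using `tr 1 = d`.
-/

section Superoperators

variable {d : ℕ}

theorem coe_hermOne : (hermOne d : Mat d) = 1 := rfl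

theorem outerSO_apply (A B X : HermM d) :
    outerSO d A B X = (trace ((B : Mat d) * (X : Mat d))).re • A := rfl

theorem outerSO_smul_left (c : ℝ) (A B : HermM d) :
    outerSO d (c • A) B = c • outerSO d A B := by
  ext X : 1
  simp only [outerSO_apply, LinearMap.smul_apply, smul_comm c]

theorem outerSO_sub_left (A A' B : HermM d) :
    outerSO d (A - A') B = outerSO d A B - outerSO d A' B := by
  ext X : 1
  simp only [outerSO_apply, LinearMap.sub_apply, smul_sub]

theorem sum_outerSO_right {ι : Type*} (s : Finset ι) (A : HermM d) (B : ι → HermM d) :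
    ∑ i ∈ s, outerSO d A (B i) = outerSO d A (∑ i ∈ s, B i) := by
  ext X : 1
  simp only [outerSO_apply, LinearMap.sum_apply, Submodule.coe_sum,
    Finset.sum_mul, trace_sum, Complex.re_sum, Finset.sum_smul]

end Superoperators

section CanonicalDual

variable {d : ℕ}

/-- `Θ = d F⁻¹(P) / tr P` for the frame superoperator `F = αI + β|1⟩⟩⟨⟨1|` with `α + dβ = d`. -/
def canonicalDual (α : ℝ) (P : HermM d) : HermM d :=
  ((d : ℝ) * α * (trace (P : Mat d)).re)⁻¹ •
    ((d : ℝ) ^ 2 • P - (((d : ℝ) - α) * (trace (P : Mat d)).re) • hermOne d)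

theorem canonicalDual_eq {α : ℝ} {P : HermM d} (hd : (d : ℝ) ≠ 0) (hα : α ≠ 0)
    (hP : (trace (P : Mat d)).re ≠ 0) :
    canonicalDual α P =
      ((d : ℝ) / (α * (trace (P : Mat d)).re)) • P - (((d : ℝ) - α) / (d * α)) • hermOne d := by
  rw [canonicalDual, smul_sub, smul_smul, smul_smul]
  congr 2 <;> field_simp

theorem trace_mul_self_smul_sub_smul_one (a b : ℝ) (P : HermM d) :
    (trace (((a • P - b • hermOne d : HermM d) : Mat d) *
      ((a • P - b • hermOne d : HermM d) : Mat d))).re =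
      a ^ 2 * (trace ((P : Mat d) * (P : Mat d))).re - 2 * a * b * (trace (P : Mat d)).re
        + b ^ 2 * d := by
  simp only [AddSubgroupClass.coe_sub, SetLike.val_smul, coe_hermOne, mul_sub, sub_mul,
    Algebra.mul_smul_comm, Algebra.smul_mul_assoc, one_mul, mul_one, trace_sub, trace_smul,
    Complex.real_smul, trace_one, Fintype.card_fin, Complex.sub_re, Complex.mul_re,
    Complex.ofReal_re, Complex.ofReal_im, Complex.natCast_re, Complex.natCast_im, zero_mul,
    mul_zero, sub_zero]
  ring

theorem trace_canonicalDual_mul_self {α : ℝ} {P : HermM d} (hd : (d : ℝ) ≠ 0) (hα : α ≠ 0)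
    (hP : (trace (P : Mat d)).re ≠ 0) :
    (trace ((canonicalDual α P : Mat d) * (canonicalDual α P : Mat d))).re =
      ((d : ℝ) ^ 2 * ((trace ((P : Mat d) * (P : Mat d))).re / (trace (P : Mat d)).re ^ 2) - d)
        / α ^ 2 + 1 / d := by
  rw [canonicalDual_eq hd hα hP, trace_mul_self_smul_sub_smul_one]
  field_simp
  ring

theorem sum_outerSO_canonicalDual {ι : Type*} [Fintype ι] (P : ι → HermM d) {α β : ℝ}
    (hd : (d : ℝ) ≠ 0) (hα : α ≠ 0) (hP : ∀ j, (trace (P j : Mat d)).re ≠ 0)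
    (hsum : ∑ j, P j = hermOne d) (hαβ : α + d * β = d)
    (hframe : (d : ℝ) • ∑ j, ((trace (P j : Mat d)).re)⁻¹ • outerSO d (P j) (P j) =
      α • LinearMap.id + β • outerSO d (hermOne d) (hermOne d)) :
    ∑ j, outerSO d (canonicalDual α (P j)) (P j) = LinearMap.id := by
  have hβ : ((d : ℝ) - α) / (d * α) = β / α := by field_simp; linarith
  calc ∑ j, outerSO d (canonicalDual α (P j)) (P j)
      = α⁻¹ • ((d : ℝ) • ∑ j, ((trace (P j : Mat d)).re)⁻¹ • outerSO d (P j) (P j)) -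
          (β / α) • ∑ j, outerSO d (hermOne d) (P j) := by
        simp only [canonicalDual_eq hd hα (hP _), outerSO_sub_left, outerSO_smul_left, hβ,
          Finset.smul_sum, smul_smul]
        refine (Finset.sum_sub_distrib (G := HermM d →ₗ[ℝ] HermM d) _ _).trans ?_
        congr 2 with j
        field_simp
    _ = α⁻¹ • (α • LinearMap.id + β • outerSO d (hermOne d) (hermOne d)) -
          (β / α) • outerSO d (hermOne d) (hermOne d) := by
        rw [hframe, sum_outerSO_right, hsum]
    _ = LinearMap.id := by
        match_scalars <;> field_simp
        ring

end CanonicalDual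

theorem tightIC_canonical_reconstruction_general (d n : ℕ)
    (P : Fin n → HermM d) (α β : ℝ)
    (htrpos : ∀ j, 0 < (Matrix.trace (P j : Mat d)).re)
    (hsum : ∑ j, (P j : Mat d) = 1)
    (hα : 0 < α) (hαβ : α + d * β = d)
    (hframe : (d : ℝ) • ∑ j, ((Matrix.trace (P j : Mat d)).re)⁻¹ • outerSO d (P j) (P j) =
      α • LinearMap.id + β • outerSO d (hermOne d) (hermOne d)) :
    (∑ j, outerSO d
        ((((d : ℝ) * α * (Matrix.trace (P j : Mat d)).re))⁻¹ •
          (((d : ℝ) ^ 2) • P j -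
            (((d : ℝ) - α) * (Matrix.trace (P j : Mat d)).re) • hermOne d))
        (P j) = LinearMap.id) ∧
    (∀ j, (Matrix.trace
        (((((d : ℝ) * α * (Matrix.trace (P j : Mat d)).re))⁻¹ •
          (((d : ℝ) ^ 2) • P j -
            (((d : ℝ) - α) * (Matrix.trace (P j : Mat d)).re) • hermOne d) : HermM d) *
         ((((d : ℝ) * α * (Matrix.trace (P j : Mat d)).re))⁻¹ •
          (((d : ℝ) ^ 2) • P j -
            (((d : ℝ) - α) * (Matrix.trace (P j : Mat d)).re) • hermOne d) : HermM d) :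
          Mat d)).re =
      ((d : ℝ) ^ 2 * ((Matrix.trace ((P j : Mat d) * (P j : Mat d))).re /
        (Matrix.trace (P j : Mat d)).re ^ 2) - d) / α ^ 2 + 1 / d) := by
  have hd : (d : ℝ) ≠ 0 := by
    rintro hd
    rw [hd, zero_mul, add_zero] at hαβ
    exact hα.ne' hαβ
  have htr : ∀ j, (Matrix.trace (P j : Mat d)).re ≠ 0 := fun j => (htrpos j).ne'
  have hsum' : ∑ j, P j = hermOne d := Subtype.ext (by rw [Submodule.coe_sum, coe_hermOne, hsum])
  exact ⟨sum_outerSO_canonicalDual P hd hα.ne' htr hsum' hαβ hframe,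
    fun j => trace_canonicalDual_mul_self hd hα.ne' (htr j)⟩

/-- For a tight IC POVM with frame superoperator αI + β|1⟩⟩⟨⟨1|
(α + dβ = d, α > 0), the canonical reconstruction operators
Θ_j = [d²Π_j − (d−α) tr(Π_j) 1]/(dα tr(Π_j)) satisfy Σ_j |Θ_j⟩⟩⟨⟨Π_j| = I and
tr(Θ_j²) = (d²𝓅_j − d)/α² + 1/d, with 𝓅_j = tr(Π_j²)/tr(Π_j)². -/
theorem tightIC_canonical_reconstruction (d n : ℕ) (hd : 2 ≤ d)
    (P : Fin n → HermM d) (α β : ℝ)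
    (hpsd : ∀ j, ((P j : Mat d)).PosSemidef)
    (htrpos : ∀ j, 0 < (Matrix.trace (P j : Mat d)).re)
    (hsum : ∑ j, (P j : Mat d) = 1)
    (hα : 0 < α) (hαβ : α + d * β = d)
    (hframe : (d : ℝ) • ∑ j, ((Matrix.trace (P j : Mat d)).re)⁻¹ • outerSO d (P j) (P j) =
      α • LinearMap.id + β • outerSO d (hermOne d) (hermOne d)) :
    (∑ j, outerSO d
        ((((d : ℝ) * α * (Matrix.trace (P j : Mat d)).re))⁻¹ •
          (((d : ℝ) ^ 2) • P j -
            (((d : ℝ) - α) * (Matrix.trace (P j : Mat d)).re) • hermOne d))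
        (P j) = LinearMap.id) ∧
    (∀ j, (Matrix.trace
        (((((d : ℝ) * α * (Matrix.trace (P j : Mat d)).re))⁻¹ •
          (((d : ℝ) ^ 2) • P j -
            (((d : ℝ) - α) * (Matrix.trace (P j : Mat d)).re) • hermOne d) : HermM d) *
         ((((d : ℝ) * α * (Matrix.trace (P j : Mat d)).re))⁻¹ •
          (((d : ℝ) ^ 2) • P j -
            (((d : ℝ) - α) * (Matrix.trace (P j : Mat d)).re) • hermOne d) : HermM d) :
          Mat d)).re =
      ((d : ℝ) ^ 2 * ((Matrix.trace ((P j : Mat d) * (P j : Mat d))).re /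
        (Matrix.trace (P j : Mat d)).re ^ 2) - d) / α ^ 2 + 1 / d) :=
  tightIC_canonical_reconstruction_general d n P α β htrpos hsum hα hαβ hframe
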